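/- arXiv:2509.25252 — 4 statements merged into one kernel-verified Lean document; each statement's English description precedes it below -/
import Mathlib

section
/- Threshold for dominance: Given s, g : Fin n → ℝ with g i₀ > g j for all j ≠ i₀, there exists α₀ ≥ 0 such that for all α ≥ α₀, the softmax probability of i₀ under s + α • g exceeds 1/2. -/
/-!
Dividing numerator and denominator by `exp (t i₀)` writes the softmax weight of `i₀` as
`(1 + ∑_{j ≠ i₀} exp (t j - t i₀))⁻¹`. Under `t = s + α • g` each exponent equals
`s j - s i₀ - α (g i₀ - g j)` with `g i₀ - g j > 0`, so every summand, and hence the finite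
sum, tends to `0` as `α → ∞`; once the sum is below `1` the weight exceeds `1/2`.
-/

open Filter Finset Real Topology

noncomputable def softmax {n : ℕ} (s : Fin n → ℝ) (i : Fin n) : ℝ :=
  Real.exp (s i) / ∑ j, Real.exp (s j)

lemma softmax_eq_inv_one_add {n : ℕ} (t : Fin n → ℝ) (i : Fin n) :
    softmax t i = (1 + ∑ j ∈ univ.erase i, exp (t j - t i))⁻¹ := by
  have hpos : 0 < exp (t i) := exp_pos _
  simp_rw [exp_sub, ← Finset.sum_div]
  rw [softmax, ← Finset.add_sum_erase _ _ (mem_univ i)]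
  field_simp

lemma half_lt_softmax_iff {n : ℕ} (t : Fin n → ℝ) (i : Fin n) :
    1 / 2 < softmax t i ↔ ∑ j ∈ univ.erase i, exp (t j - t i) < 1 := by
  have hS : 0 ≤ ∑ j ∈ univ.erase i, exp (t j - t i) := sum_nonneg fun j _ => (exp_pos _).le
  rw [softmax_eq_inv_one_add, one_div, inv_lt_inv₀ two_pos (by linarith)]
  constructor <;> intro h <;> linarith

lemma tendsto_exp_affine_sub_atTop {a b c d : ℝ} (hcd : c < d) :
    Tendsto (fun α : ℝ => exp ((a + α * c) - (b + α * d))) atTop (𝓝 0) := by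
  have hlin : Tendsto (fun α : ℝ => (a - b) + α * (c - d)) atTop atBot :=
    tendsto_atBot_add_const_left _ _
      (tendsto_id.atTop_mul_const_of_neg (sub_neg.2 hcd))
  exact (tendsto_exp_atBot.comp hlin).congr fun α => by simp only [Function.comp]; ring_nf

lemma eventually_half_lt_softmax_add_mul {n : ℕ} (s g : Fin n → ℝ) (i₀ : Fin n)
    (hmax : ∀ j, j ≠ i₀ → g j < g i₀) :
    ∀ᶠ α in atTop, 1 / 2 < softmax (fun j => s j + α * g j) i₀ := by
  simp_rw [half_lt_softmax_iff]
  have hsum : Tendsto (fun α : ℝ => ∑ j ∈ univ.erase i₀,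
      exp ((s j + α * g j) - (s i₀ + α * g i₀))) atTop (𝓝 0) := by
    simpa only [sum_const_zero] using tendsto_finsetSum (univ.erase i₀) fun j hj =>
      tendsto_exp_affine_sub_atTop (a := s j) (b := s i₀) (hmax j (ne_of_mem_erase hj))
  exact hsum.eventually (gt_mem_nhds one_pos)

theorem dominance_threshold_general {n : ℕ} (s g : Fin n → ℝ) (i₀ : Fin n)
    (hmax : ∀ j, j ≠ i₀ → g j < g i₀) :
    ∃ α₀ : ℝ, 0 ≤ α₀ ∧ ∀ α : ℝ, α₀ ≤ α →
      1 / 2 < softmax (fun j => s j + α * g j) i₀ := by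
  obtain ⟨α₁, h⟩ := eventually_atTop.1 (eventually_half_lt_softmax_add_mul s g i₀ hmax)
  exact ⟨max α₁ 0, le_max_right _ _, fun α hα => h α (le_of_max_le_left hα)⟩

/-- Threshold for dominance: if `i₀` uniquely maximizes `g`, then there is a gate value
`α₀ ≥ 0` beyond which the softmax probability of `i₀` under `s + α • g` exceeds `1/2`. -/
theorem dominance_threshold {n : ℕ} (hn : 2 ≤ n) (s g : Fin n → ℝ) (i₀ : Fin n)
    (hmax : ∀ j, j ≠ i₀ → g j < g i₀) :
    ∃ α₀ : ℝ, 0 ≤ α₀ ∧ ∀ α : ℝ, α₀ ≤ α →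
      1 / 2 < softmax (fun j => s j + α * g j) i₀ :=
  dominance_threshold_general s g i₀ hmax
end

section
/- Explicit dominance threshold: if g i₀ - g j ≥ δ > 0 for all j ≠ i₀ and |s i - s k| ≤ M for all i, k, then for any α > (M + log(n-1))/δ, the softmax probability of i₀ under s + α • g is strictly greater than 1/2. -/
/-- Explicit dominance threshold: if `g i₀ - g j ≥ δ > 0` for all `j ≠ i₀` and the score
spread is bounded by `M`, then for any `α > (M + log (n-1)) / δ` the softmax probability
of `i₀` under `s + α • g` is strictly greater than `1/2`. -/
theorem explicit_dominance_threshold {n : ℕ} (hn : 2 ≤ n) (s g : Fin n → ℝ)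
    (i₀ : Fin n) (δ M : ℝ) (hδ : 0 < δ) (hM : 0 ≤ M)
    (hgap : ∀ j, j ≠ i₀ → δ ≤ g i₀ - g j)
    (hspread : ∀ i k, |s i - s k| ≤ M)
    (α : ℝ) (hα : (M + Real.log ((n : ℝ) - 1)) / δ < α) :
    1 / 2 < softmax (fun j => s j + α * g j) i₀ := by
  set t : Fin n → ℝ := fun j => s j + α * g j with ht
  have hD : (0:ℝ) < ∑ j, Real.exp (t j) :=
    Finset.sum_pos (fun j _ => Real.exp_pos _) ⟨i₀, Finset.mem_univ _⟩
  have hsplit : ∑ j, Real.exp (t j)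
      = Real.exp (t i₀) + ∑ j ∈ Finset.univ.erase i₀, Real.exp (t j) :=
    (Finset.add_sum_erase _ _ (Finset.mem_univ i₀)).symm
  have hn1 : (1:ℝ) ≤ (n:ℝ) - 1 := by
    have : (2:ℝ) ≤ (n:ℝ) := by exact_mod_cast hn
    linarith
  have hn1pos : (0:ℝ) < (n:ℝ) - 1 := by linarith
  have hαδ : M + Real.log ((n:ℝ) - 1) < α * δ := (div_lt_iff₀ hδ).mp hα
  have hterm : ∀ j ∈ Finset.univ.erase i₀,
      Real.exp (t j) ≤ Real.exp (t i₀) * Real.exp (M - α * δ) := by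
    intro j hj
    rw [← Real.exp_add]
    apply Real.exp_le_exp.mpr
    have h1 := hgap j (Finset.ne_of_mem_erase hj)
    have h2 := abs_le.mp (hspread j i₀)
    have hlog : 0 ≤ Real.log ((n:ℝ) - 1) := Real.log_nonneg hn1
    have hα0 : 0 ≤ α := by
      have : 0 ≤ (M + Real.log ((n:ℝ) - 1)) / δ := by positivity
      linarith
    have hmul : α * δ ≤ α * (g i₀ - g j) := mul_le_mul_of_nonneg_left h1 hα0
    simp only [ht]
    nlinarith [h2.1, h2.2]
  have hcard : (Finset.univ.erase i₀).card = n - 1 := by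
    rw [Finset.card_erase_of_mem (Finset.mem_univ _), Finset.card_univ, Fintype.card_fin]
  have hcastcard : ((Finset.univ.erase i₀).card : ℝ) = (n:ℝ) - 1 := by
    rw [hcard]
    have h1 : (1:ℕ) ≤ n := by omega
    push_cast [Nat.cast_sub h1]
    ring
  have hS : ∑ j ∈ Finset.univ.erase i₀, Real.exp (t j)
      ≤ ((n:ℝ) - 1) * (Real.exp (t i₀) * Real.exp (M - α * δ)) := by
    have := Finset.sum_le_card_nsmul (Finset.univ.erase i₀) (fun j => Real.exp (t j))
      (Real.exp (t i₀) * Real.exp (M - α * δ)) hterm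
    rwa [nsmul_eq_mul, hcastcard] at this
  have hexp : Real.exp (M - α * δ) < ((n:ℝ) - 1)⁻¹ := by
    have : M - α * δ < -Real.log ((n:ℝ) - 1) := by linarith
    calc Real.exp (M - α * δ) < Real.exp (-Real.log ((n:ℝ) - 1)) := Real.exp_lt_exp.mpr this
      _ = ((n:ℝ) - 1)⁻¹ := by rw [Real.exp_neg, Real.exp_log hn1pos]
  have hSlt : ∑ j ∈ Finset.univ.erase i₀, Real.exp (t j) < Real.exp (t i₀) := by
    calc ∑ j ∈ Finset.univ.erase i₀, Real.exp (t j)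
        ≤ ((n:ℝ) - 1) * (Real.exp (t i₀) * Real.exp (M - α * δ)) := hS
      _ < ((n:ℝ) - 1) * (Real.exp (t i₀) * ((n:ℝ) - 1)⁻¹) := by
          apply mul_lt_mul_of_pos_left _ hn1pos
          exact mul_lt_mul_of_pos_left hexp (Real.exp_pos _)
      _ = Real.exp (t i₀) := by field_simp
  rw [softmax]
  rw [div_lt_div_iff₀ two_pos hD]
  rw [hsplit]
  linarith
end

section
/- Probability mass of allowed set under grounding: if g i = c > 0 for all i in a set V and g i = 0 otherwise, then the total softmax probability of V under s + α • g is strictly increasing in α (for α ∈ ℝ), provided V is nonempty and its complement is nonempty. -/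
/-- Probability mass of the allowed set under grounding: with `g = c > 0` on `V`
and `0` off `V`, where both `V` and its complement are nonempty, the total softmax
probability of `V` under `s + α • g` is strictly increasing in `α`. -/
theorem allowed_mass_strict_mono {n : ℕ} (s : Fin n → ℝ) (V : Finset (Fin n))
    (hV : V.Nonempty) (hVc : ∃ i, i ∉ V) (c : ℝ) (hc : 0 < c) :
    StrictMono (fun α : ℝ =>
      ∑ i ∈ V, softmax (fun j => s j + α * (if j ∈ V then c else 0)) i) := by
  intro α β hab
  set A := ∑ i ∈ V, Real.exp (s i) with hA
  set B := ∑ i ∈ Vᶜ, Real.exp (s i) with hB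
  have hApos : 0 < A := Finset.sum_pos (fun i _ => Real.exp_pos _) hV
  have hBpos : 0 < B := Finset.sum_pos (fun i _ => Real.exp_pos _)
    (by obtain ⟨i, hi⟩ := hVc; exact ⟨i, Finset.mem_compl.2 hi⟩)
  have key : ∀ γ : ℝ, (∑ i ∈ V, softmax (fun j => s j + γ * (if j ∈ V then c else 0)) i)
      = A * Real.exp (γ * c) / (A * Real.exp (γ * c) + B) := by
    intro γ
    have hden : (∑ j, Real.exp (s j + γ * (if j ∈ V then c else 0)))
        = A * Real.exp (γ * c) + B := by
      rw [← Finset.sum_add_sum_compl V]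
      congr 1
      · rw [hA, Finset.sum_mul]
        refine Finset.sum_congr rfl fun i hi => ?_
        rw [if_pos hi, Real.exp_add]
      · refine Finset.sum_congr rfl fun i hi => ?_
        rw [if_neg (Finset.mem_compl.1 hi)]; simp
    unfold softmax
    rw [← Finset.sum_div, hden]
    congr 1
    rw [hA, Finset.sum_mul]
    refine Finset.sum_congr rfl fun i hi => ?_
    simp only [if_pos hi, Real.exp_add]
  simp only [key]
  have h1 : 0 < A * Real.exp (α * c) + B := by positivity
  have h2 : 0 < A * Real.exp (β * c) + B := by positivity
  rw [div_lt_div_iff₀ h1 h2]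
  have hexp : Real.exp (α * c) < Real.exp (β * c) :=
    Real.exp_lt_exp.2 (by nlinarith)
  nlinarith [mul_pos hApos hBpos]
end

section
/- Softmax probability of the boosted set tends to 1: with g the indicator of a nonempty set V scaled by c > 0 (g i = c on V, 0 off V), the total softmax probability ∑_{i∈V} p_α(i) under scores s + α • g tends to 1 as α → ∞. -/
/-- The softmax probability mass of the boosted set tends to 1: with `g = c > 0` on the
nonempty set `V` and `0` off `V`, the total probability of `V` under `s + α • g` tends
to `1` as `α → ∞`. -/
theorem boosted_mass_tendsto_one {n : ℕ} (hn : 1 ≤ n) (s : Fin n → ℝ)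
    (V : Finset (Fin n)) (hV : V.Nonempty) (c : ℝ) (hc : 0 < c) :
    Filter.Tendsto (fun α : ℝ =>
        ∑ i ∈ V, softmax (fun j => s j + α * (if j ∈ V then c else 0)) i)
      Filter.atTop (nhds 1) := by
  set A := ∑ i ∈ V, Real.exp (s i) with hA
  set B := ∑ i ∈ Vᶜ, Real.exp (s i) with hB
  have hApos : 0 < A := Finset.sum_pos (fun i _ => Real.exp_pos _) hV
  have hBnn : 0 ≤ B := Finset.sum_nonneg fun i _ => (Real.exp_pos _).le
  have key : ∀ α : ℝ, (∑ i ∈ V, softmax (fun j => s j + α * (if j ∈ V then c else 0)) i)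
      = A / (A + Real.exp (-(α * c)) * B) := by
    intro α
    unfold softmax
    have hD : ∑ j, Real.exp (s j + α * (if j ∈ V then c else 0))
        = Real.exp (α * c) * A + B := by
      rw [← Finset.sum_add_sum_compl V]
      congr 1
      · rw [Finset.mul_sum]
        refine Finset.sum_congr rfl fun i hi => ?_
        simp [hi, Real.exp_add, mul_comm]
      · refine Finset.sum_congr rfl fun i hi => ?_
        simp at hi
        simp [hi]
    have hnum : ∑ i ∈ V, Real.exp (s i + α * (if i ∈ V then c else 0))
        = Real.exp (α * c) * A := by
      rw [Finset.mul_sum]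
      refine Finset.sum_congr rfl fun i hi => ?_
      simp [hi, Real.exp_add, mul_comm]
    rw [← Finset.sum_div, hnum, hD]
    have h1 : (0:ℝ) < Real.exp (α * c) * A + B :=
      add_pos_of_pos_of_nonneg (mul_pos (Real.exp_pos _) hApos) hBnn
    have h2 : (0:ℝ) < A + Real.exp (-(α * c)) * B :=
      add_pos_of_pos_of_nonneg hApos (mul_nonneg (Real.exp_pos _).le hBnn)
    rw [div_eq_div_iff h1.ne' h2.ne', Real.exp_neg]
    field_simp
  simp_rw [key]
  have hexp : Filter.Tendsto (fun α : ℝ => Real.exp (-(α * c))) Filter.atTop (nhds 0) := by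
    apply Real.tendsto_exp_atBot.comp
    exact Filter.tendsto_neg_atBot_iff.mpr (Filter.Tendsto.atTop_mul_const hc Filter.tendsto_id)
  have hden : Filter.Tendsto (fun α : ℝ => A + Real.exp (-(α * c)) * B)
      Filter.atTop (nhds (A + 0 * B)) :=
    tendsto_const_nhds.add (hexp.mul tendsto_const_nhds)
  have h := (tendsto_const_nhds (x := A)).div hden (by simpa using hApos.ne')
  simpa [Pi.div_def, div_self hApos.ne'] using h
end
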